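/- arXiv:2011.13770 — 3 statements merged into one kernel-verified Lean document; each statement's English description precedes it below -/
import Mathlib

section
/- Let Ω be a real-connected slice-domain in W with Ω ∩ ℝ^d ≠ ∅. Then for every q ∈ Ω and every x ∈ Ω ∩ ℝ^d there exist I ∈ 𝒞 and a continuous path γ : [0,1] → Ω with γ(0) = q, γ(1) = x and γ([0,1]) ⊆ ℂ_I^d (a path on a slice from q to x). -/
/-!
Fix a real point `x ∈ Ω` and call `p ∈ Ω` good if a path inside some `Ω ∩ ℂ_I^d` joins it
to `x`. Slices are convex, hence locally path-connected, so any set that is invariant under moving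
along slice paths inside `Ω` is slice-open, and so is its complement in `Ω`; as `Ω` is
slice-connected and `x` is good, it suffices that goodness is invariant. Let `p` be good and
joined to `p'` on the slice `ℂ_J^d`. If `p` is not real, one of its coordinates is a non-real
element of both `ℂ_I` and `ℂ_J`, which forces `I = ±J`, so the two paths lie on the same slice.
If `p` is real, then `p` and `x` both lie in the connected set `Ω ∩ ℝ^d`, which sits inside the
open subset `Ω ∩ ℂ_J^d` of the slice `ℂ_J^d`, and so they are joined by a path in it.
-/

noncomputable section

/-- `ℝ^{2n}` as a Euclidean space. -/
abbrev V (n : ℕ) : Type := EuclideanSpace ℝ (Fin (2 * n))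

/-- `End(ℝ^{2n})`: the (continuous, hence in finite dimension all) real-linear
endomorphisms of `ℝ^{2n}`; multiplication is composition. -/
abbrev EndE (n : ℕ) : Type := V n →L[ℝ] V n

/-- The set `𝔠_n` of complex structures on `ℝ^{2n}`. -/
def CS (n : ℕ) : Set (EndE n) := {I | I * I = -1}

/-- The slice `ℂ_I = {x·id + y·I : x, y ∈ ℝ}`. -/
def CI {n : ℕ} (I : EndE n) : Set (EndE n) := {A | ∃ x y : ℝ, A = x • (1 : EndE n) + y • I}

/-- The slice `ℂ_I^d ⊆ [End(ℝ^{2n})]^d`. -/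
def CId (n d : ℕ) (I : EndE n) : Set (Fin d → EndE n) := {q | ∀ ℓ, q ℓ ∈ CI I}

/-- `ℝ^d` identified with the tuples `(x₁·id, …, x_d·id)`. -/
def RealSet (n d : ℕ) : Set (Fin d → EndE n) := {q | ∀ ℓ, ∃ x : ℝ, q ℓ = x • (1 : EndE n)}

/-- The weak slice-cone `W = ⋃_{I ∈ 𝒞} ℂ_I^d`. -/
def Wcone (n d : ℕ) (𝒞 : Set (EndE n)) : Set (Fin d → EndE n) := ⋃ I ∈ 𝒞, CId n d I

/-- `Ω` is slice-open: `Ω ⊆ W` and for every `I ∈ 𝒞`, `Ω ∩ ℂ_I^d` is open in the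
Euclidean (subspace) topology of `ℂ_I^d`. -/
def SliceOpen (n d : ℕ) (𝒞 : Set (EndE n)) (Ω : Set (Fin d → EndE n)) : Prop :=
  Ω ⊆ Wcone n d 𝒞 ∧ ∀ I ∈ 𝒞, ∃ U : Set (Fin d → EndE n), IsOpen U ∧ Ω ∩ CId n d I = U ∩ CId n d I

/-- The slice topology `τ_s`: a set is open iff its intersection with each slice `ℂ_I^d`
(`I ∈ 𝒞`) is open in the Euclidean topology of the slice. -/
def sliceTop (n d : ℕ) (𝒞 : Set (EndE n)) : TopologicalSpace (Fin d → EndE n) :=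
  ⨆ I ∈ 𝒞, TopologicalSpace.coinduced (Subtype.val : CId n d I → Fin d → EndE n) inferInstance

/-- A slice-domain: a nonempty slice-open set, connected in the slice topology. -/
def SliceDomain (n d : ℕ) (𝒞 : Set (EndE n)) (Ω : Set (Fin d → EndE n)) : Prop :=
  SliceOpen n d 𝒞 Ω ∧ @IsConnected _ (sliceTop n d 𝒞) Ω

/-- `Ω` is real-connected: `Ω ∩ ℝ^d` is connected (empty counts as connected). -/
def RealConnected (n d : ℕ) (Ω : Set (Fin d → EndE n)) : Prop :=
  IsPreconnected (Ω ∩ RealSet n d)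

section ComplexStructure

variable {A : Type*} [Ring A] [Algebra ℝ A]

theorem eq_zero_of_smul_one_add_smul_eq_zero [Nontrivial A] {J : A} (hJ : J * J = -1)
    {a b : ℝ} (h : a • (1 : A) + b • J = 0) : a = 0 ∧ b = 0 := by
  have hJh : a • J - b • (1 : A) = 0 := by
    have := congrArg (J * ·) h
    simp only [mul_add, mul_smul_comm, mul_one, hJ, mul_zero] at this
    linear_combination (norm := module) this
  have hsq : (a ^ 2 + b ^ 2) • (1 : A) = 0 := by
    linear_combination (norm := module) a • h - b • hJh
  have : a ^ 2 + b ^ 2 = 0 := (smul_eq_zero.1 hsq).resolve_right one_ne_zero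
  constructor <;> nlinarith [sq_nonneg a, sq_nonneg b]

theorem eq_zero_and_sq_eq_one_of_eq_smul_one_add_smul [Nontrivial A] {I J : A}
    (hI : I * I = -1) (hJ : J * J = -1) {a b : ℝ} (h : I = a • (1 : A) + b • J) :
    a = 0 ∧ b ^ 2 = 1 := by
  have hII : (a ^ 2 - b ^ 2 + 1) • (1 : A) + (2 * a * b) • J = 0 := by
    have := congrArg (fun X => X * X) h
    simp only [hI, add_mul, mul_add, smul_mul_smul_comm, one_mul, mul_one, hJ] at this
    linear_combination (norm := module) -this
  obtain ⟨h₁, h₂⟩ := eq_zero_of_smul_one_add_smul_eq_zero hJ hII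
  have ha : a = 0 := by
    rcases mul_eq_zero.1 (by linarith : a * b = 0) with ha | hb
    · exact ha
    · subst hb; nlinarith [sq_nonneg a]
  exact ⟨ha, by subst ha; linarith⟩

end ComplexStructure

open Set Topology

section PathConnectivity

variable {X : Type*} [TopologicalSpace X] [LocallyPathConnectedSpace X]

theorem IsPreconnected.joinedIn_of_subset_isOpen {S U : Set X} (hS : IsPreconnected S)
    (hU : IsOpen U) (hSU : S ⊆ U) {x y : X} (hx : x ∈ S) (hy : y ∈ S) : JoinedIn U x y := by
  have hconn : IsPathConnected (_root_.connectedComponentIn U x) :=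
    hU.connectedComponentIn.isConnected_iff_isPathConnected.1
      (isConnected_connectedComponentIn_iff.2 (hSU hx))
  have hsub := hS.subset_connectedComponentIn hx hSU
  exact (hconn.joinedIn x (hsub hx) y (hsub hy)).mono (connectedComponentIn_subset U x)

theorem isOpen_of_forall_joinedIn_mem {T U : Set X} (hU : IsOpen U) (hTU : T ⊆ U)
    (hT : ∀ x ∈ T, ∀ y, JoinedIn U x y → y ∈ T) : IsOpen T :=
  isOpen_iff_mem_nhds.2 fun x hx =>
    Filter.mem_of_superset (pathComponentIn_mem_nhds (hU.mem_nhds (hTU hx))) (hT x hx)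

end PathConnectivity

section Slice

variable {n d : ℕ}

theorem CI_smul {J : EndE n} {b : ℝ} (hb : b ≠ 0) : CI (b • J) = CI J := by
  ext A
  constructor
  · rintro ⟨x, y, rfl⟩
    exact ⟨x, y * b, by module⟩
  · rintro ⟨x, y, rfl⟩
    exact ⟨x, y / b, by rw [smul_smul, div_mul_cancel₀ y hb]⟩

theorem CI_eq_of_mem_of_forall_ne {I J : EndE n} (hI : I ∈ CS n) (hJ : J ∈ CS n) {A : EndE n}
    (hAI : A ∈ CI I) (hAJ : A ∈ CI J) (hA : ∀ x : ℝ, A ≠ x • 1) : CI I = CI J := by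
  obtain ⟨x, y, rfl⟩ := hAI
  obtain ⟨x', y', hxy⟩ := hAJ
  have hy : y ≠ 0 := by
    rintro rfl
    exact hA x (by module)
  have : Nontrivial (EndE n) := by
    by_contra h
    rw [not_nontrivial_iff_subsingleton] at h
    exact hA 0 (Subsingleton.elim _ _)
  have hI' : I = ((x' - x) / y) • (1 : EndE n) + (y' / y) • J := by
    have : y • I = y • (((x' - x) / y) • (1 : EndE n) + (y' / y) • J) := by
      rw [smul_add, smul_smul, smul_smul, mul_div_cancel₀ _ hy, mul_div_cancel₀ _ hy]
      linear_combination (norm := module) hxy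
    exact smul_right_injective _ hy this
  obtain ⟨ha, hb⟩ := eq_zero_and_sq_eq_one_of_eq_smul_one_add_smul hI hJ hI'
  have hIJ : I = (y' / y) • J := by rw [hI', ha]; module
  rw [hIJ, CI_smul]
  rintro hb0
  simp [hb0] at hb

theorem CId_eq_of_mem_of_notMem_realSet {I J : EndE n} (hI : I ∈ CS n) (hJ : J ∈ CS n)
    {p : Fin d → EndE n} (hpI : p ∈ CId n d I) (hpJ : p ∈ CId n d J) (hp : p ∉ RealSet n d) :
    CId n d I = CId n d J := by
  obtain ⟨ℓ, hℓ⟩ : ∃ ℓ, ∀ x : ℝ, p ℓ ≠ x • 1 := by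
    simpa [RealSet] using hp
  have hCI := CI_eq_of_mem_of_forall_ne hI hJ (hpI ℓ) (hpJ ℓ) hℓ
  ext q
  simp only [CId, mem_ofPred_eq, hCI]

theorem realSet_subset_CId (J : EndE n) : RealSet n d ⊆ CId n d J := by
  intro q hq ℓ
  obtain ⟨x, hx⟩ := hq ℓ
  exact ⟨x, 0, by rw [hx]; module⟩

theorem convex_CId (J : EndE n) : Convex ℝ (CId n d J) := by
  have : CId n d J =
      ((Submodule.pi univ fun _ => Submodule.span ℝ {1, J} : Submodule ℝ (Fin d → EndE n)) :
        Set (Fin d → EndE n)) := by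
    ext q
    simp [CId, CI, Submodule.mem_span_pair, eq_comm]
  exact this ▸ Submodule.convex _

instance (J : EndE n) : LocallyPathConnectedSpace (CId n d J) :=
  Convex.locallyPathConnectedSpace (Fin d → EndE n) (convex_CId J)

theorem joinedIn_of_joinedIn_preimage_val {J : EndE n} {Ω : Set (Fin d → EndE n)}
    {p q : CId n d J} (h : JoinedIn ((↑) ⁻¹' Ω) p q) : JoinedIn (Ω ∩ CId n d J) p q := by
  simpa [inter_comm] using h.map continuous_subtype_val

variable {𝒞 : Set (EndE n)} {Ω : Set (Fin d → EndE n)}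

theorem isOpen_sliceTop_iff {S : Set (Fin d → EndE n)} :
    IsOpen[sliceTop n d 𝒞] S ↔ ∀ J ∈ 𝒞, IsOpen ((↑) ⁻¹' S : Set (CId n d J)) := by
  unfold sliceTop
  simp only [isOpen_iSup_iff, isOpen_coinduced]

theorem SliceOpen.isOpen_preimage_val (hΩ : SliceOpen n d 𝒞 Ω) {J : EndE n} (hJ : J ∈ 𝒞) :
    IsOpen ((↑) ⁻¹' Ω : Set (CId n d J)) := by
  obtain ⟨U, hU, hΩU⟩ := hΩ.2 J hJ
  have hΩU' : ((↑) ⁻¹' Ω : Set (CId n d J)) = (↑) ⁻¹' U :=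
    Subtype.preimage_coe_eq_preimage_coe_iff.2 (by rw [inter_comm, hΩU, inter_comm])
  exact hΩU' ▸ hU.preimage continuous_subtype_val

theorem SliceOpen.joinedIn_of_mem_realSet (hΩ : SliceOpen n d 𝒞 Ω) (hrc : RealConnected n d Ω)
    {J : EndE n} (hJ : J ∈ 𝒞) {p x : Fin d → EndE n} (hp : p ∈ Ω ∩ RealSet n d)
    (hx : x ∈ Ω ∩ RealSet n d) : JoinedIn (Ω ∩ CId n d J) p x := by
  have hsub : Ω ∩ RealSet n d ⊆ CId n d J := fun q hq => realSet_subset_CId J hq.2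
  have hpre : IsPreconnected ((↑) ⁻¹' (Ω ∩ RealSet n d) : Set (CId n d J)) := by
    rw [← IsInducing.subtypeVal.isPreconnected_image, Subtype.image_preimage_coe,
      inter_eq_right.2 hsub]
    exact hrc
  exact joinedIn_of_joinedIn_preimage_val (p := ⟨p, hsub hp⟩) (q := ⟨x, hsub hx⟩) <|
    hpre.joinedIn_of_subset_isOpen (hΩ.isOpen_preimage_val hJ) (fun _ hq => hq.1) hp hx

theorem SliceOpen.isOpen_sliceTop_of_forall_joinedIn (hΩ : SliceOpen n d 𝒞 Ω)
    {S : Set (Fin d → EndE n)} (hSΩ : S ⊆ Ω)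
    (hS : ∀ J ∈ 𝒞, ∀ p ∈ S, ∀ p', JoinedIn (Ω ∩ CId n d J) p p' → p' ∈ S) :
    IsOpen[sliceTop n d 𝒞] S :=
  isOpen_sliceTop_iff.2 fun J hJ =>
    isOpen_of_forall_joinedIn_mem (hΩ.isOpen_preimage_val hJ) (fun _ hp => hSΩ hp)
      fun p hp p' hpp' => hS J hJ p hp p' (joinedIn_of_joinedIn_preimage_val hpp')

theorem SliceDomain.subset_of_forall_joinedIn_iff (hΩ : SliceDomain n d 𝒞 Ω)
    {S : Set (Fin d → EndE n)}
    (hS : ∀ J ∈ 𝒞, ∀ p p', JoinedIn (Ω ∩ CId n d J) p p' → (p ∈ S ↔ p' ∈ S))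
    (hne : (Ω ∩ S).Nonempty) : Ω ⊆ S := by
  have hin : IsOpen[sliceTop n d 𝒞] (Ω ∩ S) :=
    hΩ.1.isOpen_sliceTop_of_forall_joinedIn inter_subset_left fun J hJ p hp p' hpp' =>
      ⟨hpp'.target_mem.1, (hS J hJ p p' hpp').1 hp.2⟩
  have hout : IsOpen[sliceTop n d 𝒞] (Ω \ S) :=
    hΩ.1.isOpen_sliceTop_of_forall_joinedIn sdiff_subset fun J hJ p hp p' hpp' =>
      ⟨hpp'.target_mem.1, fun hp' => hp.2 ((hS J hJ p p' hpp').2 hp')⟩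
  have hcover : Ω ⊆ (Ω ∩ S) ∪ (Ω \ S) := by rw [inter_union_sdiff]
  exact (@IsPreconnected.subset_left_of_subset_union _ (sliceTop n d 𝒞) _ _ _ hin hout
    disjoint_sdiff_inter.symm hcover (by rwa [← inter_assoc, inter_self]) hΩ.2.2).trans
    inter_subset_right

variable (𝒞 Ω) in
def JoinedOnSlice (p x : Fin d → EndE n) : Prop :=
  ∃ I ∈ 𝒞, JoinedIn (Ω ∩ CId n d I) p x

theorem SliceOpen.joinedOnSlice_of_joinedIn (hΩ : SliceOpen n d 𝒞 Ω) (hcs : 𝒞 ⊆ CS n)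
    (hrc : RealConnected n d Ω) {x : Fin d → EndE n} (hx : x ∈ Ω ∩ RealSet n d) {J : EndE n}
    (hJ : J ∈ 𝒞) {p p' : Fin d → EndE n} (hpp' : JoinedIn (Ω ∩ CId n d J) p p')
    (hp : JoinedOnSlice 𝒞 Ω p x) : JoinedOnSlice 𝒞 Ω p' x := by
  obtain ⟨I, hI, hpx⟩ := hp
  refine ⟨J, hJ, hpp'.symm.trans ?_⟩
  by_cases hpR : p ∈ RealSet n d
  · exact hΩ.joinedIn_of_mem_realSet hrc hJ ⟨hpp'.source_mem.1, hpR⟩ hx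
  · rwa [← CId_eq_of_mem_of_notMem_realSet (hcs hI) (hcs hJ) hpx.source_mem.2
      hpp'.source_mem.2 hpR]

end Slice

theorem path_on_slice_to_real_point_general (n d : ℕ)
    (𝒞 : Set (EndE n)) (hcs : 𝒞 ⊆ CS n)
    (Ω : Set (Fin d → EndE n)) (hΩ : SliceDomain n d 𝒞 Ω) (hrc : RealConnected n d Ω) :
    ∀ q ∈ Ω, ∀ x ∈ Ω ∩ RealSet n d,
      ∃ I ∈ 𝒞, ∃ γ : ℝ → Fin d → EndE n,
        ContinuousOn γ (Set.Icc 0 1) ∧ γ 0 = q ∧ γ 1 = x ∧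
        ∀ t ∈ Set.Icc (0:ℝ) 1, γ t ∈ Ω ∩ CId n d I := by
  intro q hq x hx
  have hx_joined : JoinedOnSlice 𝒞 Ω x x := by
    obtain ⟨J, hJ, hxJ⟩ := mem_iUnion₂.1 (hΩ.1.1 hx.1)
    exact ⟨J, hJ, JoinedIn.refl ⟨hx.1, hxJ⟩⟩
  have hall : Ω ⊆ {p | JoinedOnSlice 𝒞 Ω p x} :=
    hΩ.subset_of_forall_joinedIn_iff
      (fun J hJ p p' hpp' => ⟨hΩ.1.joinedOnSlice_of_joinedIn hcs hrc hx hJ hpp',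
        hΩ.1.joinedOnSlice_of_joinedIn hcs hrc hx hJ hpp'.symm⟩)
      ⟨x, hx.1, hx_joined⟩
  obtain ⟨I, hI, γ, hγ⟩ := hall hq
  refine ⟨I, hI, γ.extend, γ.continuous_extend.continuousOn, γ.extend_zero, γ.extend_one, ?_⟩
  intro t ht
  rw [γ.extend_apply ht]
  exact hγ _

/-- In a real-connected slice-domain meeting the reals, each point can be joined to each
real point by a continuous path (w.r.t. the Euclidean topology) lying on a single slice. -/
theorem path_on_slice_to_real_point (n d : ℕ) (hn : 1 ≤ n) (hd : 1 ≤ d)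
    (𝒞 : Set (EndE n)) (h𝒞 : 𝒞.Nonempty) (hsym : ∀ I ∈ 𝒞, -I ∈ 𝒞) (hcs : 𝒞 ⊆ CS n)
    (Ω : Set (Fin d → EndE n)) (hΩ : SliceDomain n d 𝒞 Ω) (hrc : RealConnected n d Ω)
    (hreal : (Ω ∩ RealSet n d).Nonempty) :
    ∀ q ∈ Ω, ∀ x ∈ Ω ∩ RealSet n d,
      ∃ I ∈ 𝒞, ∃ γ : ℝ → Fin d → EndE n,
        ContinuousOn γ (Set.Icc 0 1) ∧ γ 0 = q ∧ γ 1 = x ∧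
        ∀ t ∈ Set.Icc (0:ℝ) 1, γ t ∈ Ω ∩ CId n d I :=
  path_on_slice_to_real_point_general n d 𝒞 hcs Ω hΩ hrc
end
end

section
/- Let Ω be a real-connected slice-domain in W and let f, g : Ω → ℝ^{2n} be weak slice regular. (i) If Ω ∩ ℝ^d ≠ ∅ and f = g on a nonempty subset of Ω ∩ ℝ^d that is open in ℝ^d, then f = g on Ω. (ii) If f = g on a nonempty subset of Ω ∩ ℂ_I^d that is open in ℂ_I^d, for some I ∈ 𝒞, then f = g on Ω. -/
noncomputable section

/-- Φ_I : ℝ^d × ℝ^d → [End(ℝ^{2n})]^d, (x, y) ↦ (x₁·id + y₁·I, …, x_d·id + y_d·I). -/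
def Phi (n d : ℕ) (I : EndE n) : (Fin d → ℝ) × (Fin d → ℝ) → Fin d → EndE n :=
  fun p ℓ => p.1 ℓ • (1 : EndE n) + p.2 ℓ • I

/-- The standard basis direction in the x-coordinates. -/
def ex (d : ℕ) (ℓ : Fin d) : (Fin d → ℝ) × (Fin d → ℝ) := (Pi.single ℓ 1, 0)

/-- The standard basis direction in the y-coordinates. -/
def ey (d : ℕ) (ℓ : Fin d) : (Fin d → ℝ) × (Fin d → ℝ) := (0, Pi.single ℓ 1)

/-- f is weak slice regular on Ω: for every I ∈ 𝒞, f ∘ Φ_I is (Fréchet, real)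
differentiable on Φ_I⁻¹(Ω) and satisfies the Cauchy–Riemann equations
∂(f∘Φ_I)/∂x_ℓ + I(∂(f∘Φ_I)/∂y_ℓ) = 0 there, for ℓ = 1, …, d. -/
def WSRegular (n d : ℕ) (𝒞 : Set (EndE n)) (Ω : Set (Fin d → EndE n))
    (f : (Fin d → EndE n) → V n) : Prop :=
  ∀ I ∈ 𝒞, DifferentiableOn ℝ (f ∘ Phi n d I) (Phi n d I ⁻¹' Ω) ∧
    ∀ p ∈ Phi n d I ⁻¹' Ω, ∀ ℓ : Fin d,
      fderiv ℝ (f ∘ Phi n d I) p (ex d ℓ) + I (fderiv ℝ (f ∘ Phi n d I) p (ey d ℓ)) = 0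

/-!
Write `h = f - g` and, for `I ∈ 𝒞`, `ψ_I z = (Re z_ℓ · id + Im z_ℓ · I)_ℓ` for `z ∈ ℂ^d`. In the
complex coordinates `v ↦ (v_k - i (I v)_k)_k` of `ℝ^{2n}`, which turn `I` into multiplication by
`i`, the Cauchy–Riemann equations say that `h ∘ ψ_I` is holomorphic on `ψ_I⁻¹(Ω)`. Restricting to
complex lines, the one-variable identity theorem shows that the set `Z_I` of points near which
`h ∘ ψ_I` vanishes is open and closed in `ψ_I⁻¹(Ω)`, and contains every real point near which `h`
vanishes on `ℝ^d`.

Real-connectedness spreads the vanishing of `h` over all of `Ω ∩ ℝ^d`. Then `ψ_J⁻¹(Ω) \ Z_J` is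
open, closed and free of real points; as two distinct slices meet only in `ℝ^d`, its image under
`ψ_J` is open and closed in `Ω` for the slice topology, hence empty since `Ω` is slice-connected and
meets `ℝ^d`. In case (ii), `Z_I ∩ ψ_I⁻¹(Ω)` either contains a real point, and case (i) applies, or
by the same argument its image under `ψ_I` is all of `Ω`.
-/

open Set Filter Topology

section ComplexStructure

variable {A : Type*} [Ring A] [Algebra ℝ A]

theorem smul_one_add_smul_eq_zero_iff [Nontrivial A] {I : A} (hI : I * I = -1) {x y : ℝ} :
    x • (1 : A) + y • I = 0 ↔ x = 0 ∧ y = 0 := by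
  refine ⟨fun h => ?_, fun ⟨hx, hy⟩ => by rw [hx, hy, zero_smul, zero_smul, add_zero]⟩
  have hnorm : (x ^ 2 + y ^ 2) • (1 : A) = (x • 1 - y • I) * (x • 1 + y • I) := by
    simp only [sub_mul, mul_add, smul_mul_smul, one_mul, mul_one, hI]
    module
  rw [h, mul_zero, smul_eq_zero] at hnorm
  have hxy : x ^ 2 + y ^ 2 = 0 := hnorm.resolve_right one_ne_zero
  constructor <;> nlinarith [sq_nonneg x, sq_nonneg y]

theorem eq_or_eq_neg_of_smul_one_add_smul_eq [Nontrivial A] {I J : A} (hI : I * I = -1)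
    (hJ : J * J = -1) {x y x' y' : ℝ} (hy : y ≠ 0)
    (h : x • (1 : A) + y • I = x' • 1 + y' • J) : I = J ∨ I = -J := by
  set a := (x' - x) / y
  set b := y' / y
  have hIJ : I = a • 1 + b • J := by
    have : y • I = (x' - x) • 1 + y' • J := by linear_combination (norm := module) h
    calc I = y⁻¹ • (y • I) := by rw [smul_smul, inv_mul_cancel₀ hy, one_smul]
      _ = a • 1 + b • J := by rw [this]; simp only [a, b, div_eq_inv_mul, smul_add, smul_smul]
  have hsq : (a ^ 2 - b ^ 2 + 1) • (1 : A) + (2 * a * b) • J = 0 := by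
    have := hI
    rw [hIJ] at this
    simp only [add_mul, mul_add, smul_mul_smul, one_mul, mul_one, hJ] at this
    linear_combination (norm := module) this
  obtain ⟨h1, h2⟩ := (smul_one_add_smul_eq_zero_iff hJ).1 hsq
  have ha : a = 0 := by
    rcases mul_eq_zero.1 h2 with h | h
    · linarith [mul_eq_zero.1 h |>.resolve_left two_ne_zero]
    · nlinarith
  have hb : b = 1 ∨ b = -1 := by
    rw [ha] at h1; exact mul_self_eq_one_iff.1 (by nlinarith)
  rcases hb with hb | hb
  · left; rw [hIJ, ha, hb]; module
  · right; rw [hIJ, ha, hb]; module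

end ComplexStructure

theorem Set.EqOn.eventuallyEq_sub_comp {X Y E : Type*} [TopologicalSpace X] [TopologicalSpace Y]
    [AddGroup E] {f g : Y → E} {U S : Set Y} (hfg : EqOn f g (U ∩ S)) (hU : IsOpen U)
    {φ : X → Y} (hφ : Continuous φ) (hφS : ∀ x, φ x ∈ S) {x : X} (hx : φ x ∈ U) :
    (f - g) ∘ φ =ᶠ[𝓝 x] 0 := by
  filter_upwards [hφ.continuousAt (hU.mem_nhds hx)] with y hy
  simp [hfg ⟨hy, hφS y⟩]

section LineIdentity

variable {E F : Type*} [NormedAddCommGroup E] [NormedSpace ℂ E] [NormedAddCommGroup F]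
  [NormedSpace ℂ F] [CompleteSpace F] {g : E → F} {U : Set E}

theorem DifferentiableOn.apply_add_smul_eq_zero_of_frequently (hg : DifferentiableOn ℂ g U)
    (hU : IsOpen U) (hUc : Convex ℝ U) {a v : E} {τ : ℂ} (ha : a ∈ U) (hτ : a + τ • v ∈ U)
    (hfreq : ∃ᶠ t in 𝓝[≠] (0 : ℂ), g (a + t • v) = 0) : g (a + τ • v) = 0 := by
  set L : ℂ → E := fun t => a + t • v
  have hL : Differentiable ℂ L := by fun_prop
  have hS : IsOpen (L ⁻¹' U) := hU.preimage hL.continuous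
  have hSc : Convex ℝ (L ⁻¹' U) := by
    intro s hs t ht p q hp hq hpq
    simp only [mem_preimage, L] at hs ht ⊢
    convert hUc hs ht hp hq hpq using 1
    have hpq' : (p : ℂ) + q = 1 := by exact_mod_cast hpq
    simp only [← Complex.coe_smul]
    linear_combination (norm := module) (-hpq') • a
  have hanalytic : AnalyticOnNhd ℂ (g ∘ L) (L ⁻¹' U) :=
    (hg.comp hL.differentiableOn (mapsTo_preimage L U)).analyticOnNhd hS
  exact hanalytic.eqOn_zero_of_preconnected_of_frequently_eq_zero hSc.isPreconnected
    (by simpa [L] using ha) hfreq hτ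

theorem DifferentiableOn.eventuallyEq_zero_of_mem_closure (hg : DifferentiableOn ℂ g U)
    (hU : IsOpen U) {z : E} (hz : z ∈ U) (hcl : z ∈ closure {w | g =ᶠ[𝓝 w] 0}) :
    g =ᶠ[𝓝 z] 0 := by
  obtain ⟨r, hr, hball⟩ := Metric.isOpen_iff.1 hU z hz
  obtain ⟨c, hc, hcz⟩ := Metric.mem_closure_iff.1 hcl r hr
  have hcball : c ∈ Metric.ball z r := by rwa [Metric.mem_ball, dist_comm]
  refine eventually_of_mem (Metric.ball_mem_nhds z hr) fun w hw => ?_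
  have hline : Tendsto (fun t : ℂ => c + t • (w - c)) (𝓝[≠] 0) (𝓝 c) :=
    tendsto_nhdsWithin_of_tendsto_nhds (by simpa using (Continuous.tendsto (by fun_prop) 0 :
      Tendsto (fun t : ℂ => c + t • (w - c)) (𝓝 0) (𝓝 (c + (0 : ℂ) • (w - c)))))
  simpa using (hg.mono hball).apply_add_smul_eq_zero_of_frequently Metric.isOpen_ball
    (convex_ball z r) hcball (τ := 1) (by simpa using hw) (hline.eventually hc).frequently

theorem Complex.tendsto_ofReal_nhdsNE_zero : Tendsto ((↑) : ℝ → ℂ) (𝓝[≠] 0) (𝓝[≠] 0) := by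
  simpa using Complex.continuous_ofReal.continuousWithinAt.tendsto_nhdsWithin
    (x := 0) (mapsTo_iff_subset_preimage.2 fun t ht => by simpa using ht)

theorem Complex.dist_ofReal_re_le {z c : ℂ} (hc : c.im = 0) : dist (z.re : ℂ) c ≤ dist z c := by
  rw [Complex.dist_of_im_eq (by simp [hc]), Complex.ofReal_re, Real.dist_eq, dist_eq_norm,
    ← Complex.sub_re]
  exact Complex.abs_re_le_norm _

theorem DifferentiableOn.eventuallyEq_zero_of_real {d : ℕ} {g : (Fin d → ℂ) → F}
    {U : Set (Fin d → ℂ)} (hg : DifferentiableOn ℂ g U) (hU : IsOpen U) {c : Fin d → ℂ}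
    (hc : c ∈ U) (hc_real : ∀ ℓ, (c ℓ).im = 0)
    (hreal : ∀ᶠ w in 𝓝 c, (∀ ℓ, (w ℓ).im = 0) → g w = 0) : g =ᶠ[𝓝 c] 0 := by
  obtain ⟨r, hr, hrU⟩ := Metric.isOpen_iff.1 hU c hc
  obtain ⟨ε, hε, hεc⟩ := Metric.eventually_nhds_iff_ball.1 hreal
  have hρ : 0 < min r ε := lt_min hr hε
  refine eventually_of_mem (Metric.ball_mem_nhds c hρ) fun w hw => ?_
  -- `w = a + i v` with `a, v` real, and `g` vanishes at the real points `a + t v` of this line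
  set a : Fin d → ℂ := fun ℓ => ((w ℓ).re : ℂ)
  set v : Fin d → ℂ := fun ℓ => ((w ℓ).im : ℂ)
  have hw_eq : a + Complex.I • v = w := by
    ext1 ℓ; simp [a, v, mul_comm Complex.I, Complex.re_add_im]
  have ha : a ∈ Metric.ball c (min r ε) := (dist_pi_lt_iff hρ).2 fun ℓ =>
    (Complex.dist_ofReal_re_le (hc_real ℓ)).trans_lt ((dist_pi_lt_iff hρ).1 hw ℓ)
  have hline : ∀ᶠ t : ℝ in 𝓝 0, g (a + (t : ℂ) • v) = 0 := by
    have hcont : Tendsto (fun t : ℝ => a + (t : ℂ) • v) (𝓝 0) (𝓝 a) := by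
      simpa using (Continuous.tendsto (by fun_prop) 0 :
        Tendsto (fun t : ℝ => a + (t : ℂ) • v) (𝓝 0) _)
    filter_upwards [hcont (Metric.isOpen_ball.mem_nhds
      (Metric.ball_subset_ball (min_le_right _ _) ha))] with t ht
    exact hεc _ ht fun ℓ => by simp [a, v]
  rw [← hw_eq]
  have hgρ := hg.mono ((Metric.ball_subset_ball (min_le_left r ε)).trans hrU)
  exact hgρ.apply_add_smul_eq_zero_of_frequently Metric.isOpen_ball (convex_ball _ _) ha
    (hw_eq ▸ hw) (Complex.tendsto_ofReal_nhdsNE_zero.frequently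
      (hline.filter_mono nhdsWithin_le_nhds).frequently)

end LineIdentity

section Slices

variable {n d : ℕ}

def reIm (d : ℕ) : (Fin d → ℂ) →L[ℝ] (Fin d → ℝ) × (Fin d → ℝ) :=
  (ContinuousLinearMap.pi fun ℓ => Complex.reCLM.comp (ContinuousLinearMap.proj ℓ)).prod
    (ContinuousLinearMap.pi fun ℓ => Complex.imCLM.comp (ContinuousLinearMap.proj ℓ))

def sliceMap (n d : ℕ) (I : EndE n) : (Fin d → ℂ) →L[ℝ] (Fin d → EndE n) :=
  ContinuousLinearMap.pi fun ℓ =>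
    (Complex.reCLM.comp (ContinuousLinearMap.proj ℓ)).smulRight 1 +
      (Complex.imCLM.comp (ContinuousLinearMap.proj ℓ)).smulRight I

def realMap (n d : ℕ) : (Fin d → ℝ) →L[ℝ] (Fin d → EndE n) :=
  ContinuousLinearMap.pi fun ℓ => (ContinuousLinearMap.proj ℓ).smulRight 1

@[simp] theorem reIm_apply (z : Fin d → ℂ) :
    reIm d z = (fun ℓ => (z ℓ).re, fun ℓ => (z ℓ).im) := rfl

@[simp] theorem sliceMap_apply (I : EndE n) (z : Fin d → ℂ) (ℓ : Fin d) :
    sliceMap n d I z ℓ = (z ℓ).re • (1 : EndE n) + (z ℓ).im • I := rfl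

@[simp] theorem realMap_apply (x : Fin d → ℝ) (ℓ : Fin d) :
    realMap n d x ℓ = x ℓ • (1 : EndE n) := rfl

theorem sliceMap_ofReal (I : EndE n) (x : Fin d → ℝ) :
    sliceMap n d I (fun ℓ => (x ℓ : ℂ)) = realMap n d x := by
  ext1 ℓ
  simp only [sliceMap_apply, realMap_apply, Complex.ofReal_re, Complex.ofReal_im]
  module

theorem sliceMap_comp_ofReal (I : EndE n) :
    sliceMap n d I ∘ (fun x ℓ => (x ℓ : ℂ)) = realMap n d :=
  funext (sliceMap_ofReal I)

theorem range_sliceMap (I : EndE n) : range (sliceMap n d I) = CId n d I := by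
  ext q
  refine ⟨?_, fun hq => ?_⟩
  · rintro ⟨z, rfl⟩ ℓ
    exact ⟨_, _, rfl⟩
  · choose x y hxy using hq
    exact ⟨fun ℓ => ⟨x ℓ, y ℓ⟩, funext fun ℓ => (hxy ℓ).symm⟩

theorem sliceMap_mem_CId (I : EndE n) (z : Fin d → ℂ) : sliceMap n d I z ∈ CId n d I :=
  range_sliceMap I ▸ mem_range_self z

theorem realMap_mem_CId (I : EndE n) (x : Fin d → ℝ) : realMap n d x ∈ CId n d I :=
  sliceMap_ofReal I x ▸ sliceMap_mem_CId I (fun ℓ => (x ℓ : ℂ))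

theorem realMap_mem_RealSet (x : Fin d → ℝ) : realMap n d x ∈ RealSet n d :=
  fun ℓ => ⟨x ℓ, rfl⟩

theorem range_realMap : range (realMap n d) = RealSet n d := by
  ext q
  refine ⟨?_, fun hq => ?_⟩
  · rintro ⟨x, rfl⟩
    exact realMap_mem_RealSet x
  · choose x hx using hq
    exact ⟨x, funext fun ℓ => (hx ℓ).symm⟩

variable [Nontrivial (V n)]

theorem sliceMap_injective {I : EndE n} (hI : I * I = -1) :
    Function.Injective (sliceMap n d I) := by
  intro z w hzw
  ext1 ℓ
  have h := congrFun hzw ℓ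
  simp only [sliceMap_apply] at h
  obtain ⟨hre, him⟩ := (smul_one_add_smul_eq_zero_iff hI
    (x := (z ℓ).re - (w ℓ).re) (y := (z ℓ).im - (w ℓ).im)).1
      (by rw [sub_smul, sub_smul]; linear_combination (norm := module) h)
  exact Complex.ext (sub_eq_zero.1 hre) (sub_eq_zero.1 him)

theorem realMap_injective : Function.Injective (realMap n d) := by
  intro x y hxy
  ext1 ℓ
  have h := congrFun hxy ℓ
  simp only [realMap_apply] at h
  exact smul_left_injective ℝ (one_ne_zero : (1 : EndE n) ≠ 0) h

theorem exists_isOpen_image_sliceMap_eq {I : EndE n} (hI : I * I = -1)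
    {S : Set (Fin d → ℂ)} (hS : IsOpen S) :
    ∃ U, IsOpen U ∧ sliceMap n d I '' S = U ∩ CId n d I := by
  have hemb := LinearMap.isClosedEmbedding_of_injective
    (f := (sliceMap n d I : (Fin d → ℂ) →ₗ[ℝ] (Fin d → EndE n)))
    (LinearMap.ker_eq_bot.2 (sliceMap_injective hI))
  obtain ⟨U, hU, rfl⟩ := hemb.isInducing.isOpen_iff.1 hS
  exact ⟨U, hU, by rw [← range_sliceMap I]; exact image_preimage_eq_inter_range⟩

theorem isPreconnected_preimage_realMap {Ω : Set (Fin d → EndE n)}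
    (hΩ : RealConnected n d Ω) : IsPreconnected (realMap n d ⁻¹' Ω) := by
  have hind : Topology.IsInducing (realMap n d) := (LinearMap.isClosedEmbedding_of_injective
    (f := (realMap n d : (Fin d → ℝ) →ₗ[ℝ] (Fin d → EndE n)))
    (LinearMap.ker_eq_bot.2 realMap_injective)).isInducing
  rw [← hind.isPreconnected_image, image_preimage_eq_inter_range, range_realMap]
  exact hΩ

theorem exists_ofReal_of_sliceMap_mem_RealSet {I : EndE n} (hI : I * I = -1)
    {z : Fin d → ℂ} (hz : sliceMap n d I z ∈ RealSet n d) :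
    ∃ x : Fin d → ℝ, z = fun ℓ => (x ℓ : ℂ) := by
  refine ⟨fun ℓ => (z ℓ).re, funext fun ℓ => Complex.ext rfl ?_⟩
  obtain ⟨x, hx⟩ := hz ℓ
  rw [sliceMap_apply] at hx
  exact ((smul_one_add_smul_eq_zero_iff hI (x := (z ℓ).re - x) (y := (z ℓ).im)).1
    (by rw [sub_smul]; linear_combination (norm := module) hx)).2

end Slices

section SliceTopology

variable {n d : ℕ} {𝒞 : Set (EndE n)} {Ω : Set (Fin d → EndE n)}

theorem CI_neg (J : EndE n) : CI (-J) = CI J := by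
  ext A
  constructor <;> rintro ⟨x, y, rfl⟩ <;> exact ⟨x, -y, by module⟩

theorem CId_eq_or_inter_subset_RealSet [Nontrivial (V n)] {J K : EndE n} (hJ : J * J = -1)
    (hK : K * K = -1) : CId n d K = CId n d J ∨ CId n d K ∩ CId n d J ⊆ RealSet n d := by
  by_cases hKJ : K = J ∨ K = -J
  · left
    rcases hKJ with rfl | rfl
    · rfl
    · simp only [CId, CI_neg]
  · right
    rintro q ⟨hqK, hqJ⟩ ℓ
    obtain ⟨x, y, hxy⟩ := hqK ℓ
    obtain ⟨x', y', hxy'⟩ := hqJ ℓ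
    by_cases hy : y = 0
    · exact ⟨x, by rw [hxy, hy]; module⟩
    · exact absurd (eq_or_eq_neg_of_smul_one_add_smul_eq hK hJ hy (hxy.symm.trans hxy')) hKJ

theorem SliceOpen.isOpen_preimage (hΩ : SliceOpen n d 𝒞 Ω) {K : EndE n} (hK : K ∈ 𝒞)
    {X : Type*} [TopologicalSpace X] {φ : X → Fin d → EndE n} (hφ : Continuous φ)
    (hφK : ∀ x, φ x ∈ CId n d K) : IsOpen (φ ⁻¹' Ω) := by
  obtain ⟨U, hU, hΩU⟩ := hΩ.2 K hK
  convert hU.preimage hφ using 1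
  ext x
  simpa [hφK x] using Set.ext_iff.1 hΩU (φ x)

theorem SliceOpen.isOpen_preimage_sliceMap (hΩ : SliceOpen n d 𝒞 Ω) {K : EndE n} (hK : K ∈ 𝒞) :
    IsOpen (sliceMap n d K ⁻¹' Ω) :=
  hΩ.isOpen_preimage hK (sliceMap n d K).continuous (sliceMap_mem_CId K)

theorem SliceOpen.isOpen_preimage_Phi (hΩ : SliceOpen n d 𝒞 Ω) {K : EndE n} (hK : K ∈ 𝒞) :
    IsOpen (Phi n d K ⁻¹' Ω) :=
  hΩ.isOpen_preimage hK (by unfold Phi; fun_prop) fun _ _ => ⟨_, _, rfl⟩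

theorem isOpen_sliceTop_of_forall_inter_CId {S : Set (Fin d → EndE n)}
    (hS : ∀ K ∈ 𝒞, ∃ U, IsOpen U ∧ S ∩ CId n d K = U ∩ CId n d K) :
    IsOpen[sliceTop n d 𝒞] S := by
  unfold sliceTop
  rw [isOpen_iSup_iff]
  intro K
  rw [isOpen_iSup_iff]
  intro hK
  rw [isOpen_coinduced]
  obtain ⟨U, hU, hSU⟩ := hS K hK
  convert hU.preimage continuous_subtype_val using 1
  ext ⟨q, hq⟩
  simpa [hq] using Set.ext_iff.1 hSU q

theorem SliceDomain.subset_image_sliceMap [Nontrivial (V n)] (hΩ : SliceDomain n d 𝒞 Ω)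
    (hcs : 𝒞 ⊆ CS n) {J : EndE n} (hJ : J ∈ 𝒞) {C : Set (Fin d → ℂ)} (hC : IsOpen C)
    (hC' : IsOpen (sliceMap n d J ⁻¹' Ω \ C)) (hCΩ : C ⊆ sliceMap n d J ⁻¹' Ω)
    (hCne : C.Nonempty) (hCreal : ∀ z ∈ C, sliceMap n d J z ∉ RealSet n d) :
    Ω ⊆ sliceMap n d J '' C := by
  set ψ := sliceMap n d J
  have hJ2 : J * J = -1 := hcs hJ
  have himage_CId : ψ '' C ⊆ CId n d J := by
    rw [← range_sliceMap J]; exact image_subset_range _ _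
  have hdisj : ∀ K, CId n d K ∩ CId n d J ⊆ RealSet n d → ψ '' C ∩ CId n d K = ∅ := by
    refine fun K hKJ => eq_empty_of_forall_notMem ?_
    rintro q ⟨⟨z, hz, rfl⟩, hzK⟩
    exact hCreal z hz (hKJ ⟨hzK, himage_CId ⟨z, hz, rfl⟩⟩)
  have hP : IsOpen[sliceTop n d 𝒞] (ψ '' C) := by
    refine isOpen_sliceTop_of_forall_inter_CId fun K hK => ?_
    rcases CId_eq_or_inter_subset_RealSet hJ2 (hcs hK) with hKJ | hKJ
    · obtain ⟨U, hU, hUC⟩ := exists_isOpen_image_sliceMap_eq hJ2 hC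
      exact ⟨U, hU, by rw [hKJ, ← hUC, inter_eq_left.2 himage_CId]⟩
    · exact ⟨∅, isOpen_empty, by rw [hdisj K hKJ, empty_inter]⟩
  have hQ : IsOpen[sliceTop n d 𝒞] (Ω \ ψ '' C) := by
    refine isOpen_sliceTop_of_forall_inter_CId fun K hK => ?_
    rcases CId_eq_or_inter_subset_RealSet hJ2 (hcs hK) with hKJ | hKJ
    · obtain ⟨U, hU, hUC⟩ := exists_isOpen_image_sliceMap_eq hJ2 hC'
      refine ⟨U, hU, ?_⟩
      rw [hKJ, ← hUC, image_sdiff (sliceMap_injective hJ2), image_preimage_eq_inter_range,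
        range_sliceMap, sdiff_inter_right_comm]
    · obtain ⟨U, hU, hΩU⟩ := hΩ.1.2 K hK
      refine ⟨U, hU, ?_⟩
      rw [sdiff_inter_right_comm, ← hΩU, sdiff_eq_left, disjoint_iff_inter_eq_empty,
        inter_assoc, inter_comm (CId n d K), hdisj K hKJ, inter_empty]
  obtain ⟨z, hz⟩ := hCne
  exact @IsPreconnected.subset_left_of_subset_union _ (sliceTop n d 𝒞) _ _ _ hP hQ
    disjoint_sdiff_right (fun q hq => by by_cases h : q ∈ ψ '' C <;> simp [h, hq])
    ⟨ψ z, hCΩ hz, z, hz, rfl⟩ (@IsConnected.isPreconnected _ (sliceTop n d 𝒞) _ hΩ.2)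

end SliceTopology

section Holomorphy

variable {n d : ℕ}

def complexCoords (I : EndE n) : V n →L[ℝ] (Fin (2 * n) → ℂ) :=
  ContinuousLinearMap.pi fun k => Complex.ofRealCLM.comp (EuclideanSpace.proj k) -
    Complex.I • Complex.ofRealCLM.comp ((EuclideanSpace.proj k).comp I)

theorem complexCoords_apply (I : EndE n) (v : V n) (k : Fin (2 * n)) :
    complexCoords I v k = v k - Complex.I * I v k := by
  simp [complexCoords]

theorem apply_apply_of_mul_self_eq_neg_one {I : EndE n} (hI : I * I = -1) (v : V n) :
    I (I v) = -v := by
  simpa using congrArg (· v) hI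

theorem complexCoords_map {I : EndE n} (hI : I * I = -1) (v : V n) :
    complexCoords I (I v) = Complex.I • complexCoords I v := by
  ext k
  simp only [complexCoords_apply, apply_apply_of_mul_self_eq_neg_one hI, Pi.smul_apply,
    smul_eq_mul, PiLp.neg_apply, Complex.ofReal_neg]
  linear_combination ((I v k : ℝ) : ℂ) * Complex.I_sq

theorem complexCoords_eq_zero_iff (I : EndE n) {v : V n} : complexCoords I v = 0 ↔ v = 0 := by
  refine ⟨fun h => ?_, fun h => by rw [h, map_zero]⟩
  ext k
  simpa [complexCoords_apply] using congrArg Complex.re (congrFun h k)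

theorem reIm_eq_sum (z : Fin d → ℂ) :
    reIm d z = ∑ ℓ, ((z ℓ).re • ex d ℓ + (z ℓ).im • ey d ℓ) := by
  ext j <;> simp [ex, ey, Prod.fst_sum, Prod.snd_sum, Finset.sum_apply, Pi.single_apply]

theorem WSRegular.differentiableOn {𝒞 : Set (EndE n)} {Ω : Set (Fin d → EndE n)}
    {f : (Fin d → EndE n) → V n} (hf : WSRegular n d 𝒞 Ω f) (hΩ : SliceOpen n d 𝒞 Ω)
    {I : EndE n} (hI : I ∈ 𝒞) (hI2 : I * I = -1) :
    DifferentiableOn ℂ (complexCoords I ∘ f ∘ sliceMap n d I) (sliceMap n d I ⁻¹' Ω) := by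
  intro z hz
  obtain ⟨hdiff, hCR⟩ := hf I hI
  have hp : reIm d z ∈ Phi n d I ⁻¹' Ω := hz
  set L := fderiv ℝ (f ∘ Phi n d I) (reIm d z)
  have hL : HasFDerivAt (f ∘ Phi n d I) L (reIm d z) :=
    (hdiff.differentiableAt ((hΩ.isOpen_preimage_Phi hI).mem_nhds hp)).hasFDerivAt
  have hM : HasFDerivAt (complexCoords I ∘ f ∘ sliceMap n d I)
      ((complexCoords I).comp (L.comp (reIm d))) z :=
    (complexCoords I).hasFDerivAt.comp z (hL.comp z (reIm d).hasFDerivAt)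
  have hCR' : ∀ ℓ, complexCoords I (L (ey d ℓ)) = Complex.I • complexCoords I (L (ex d ℓ)) := by
    intro ℓ
    have h := congrArg I (hCR _ hp ℓ)
    rw [map_add, apply_apply_of_mul_self_eq_neg_one hI2, map_zero, add_neg_eq_zero] at h
    rw [← h, complexCoords_map hI2]
  let M : (Fin d → ℂ) →L[ℂ] (Fin (2 * n) → ℂ) :=
    ∑ ℓ, (ContinuousLinearMap.proj ℓ).smulRight (complexCoords I (L (ex d ℓ)))
  have hML : M.restrictScalars ℝ = (complexCoords I).comp (L.comp (reIm d)) := by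
    ext1 v
    simp only [ContinuousLinearMap.coe_restrictScalars', ContinuousLinearMap.comp_apply,
      reIm_eq_sum, map_sum, map_add, map_smul, hCR', M, FunLike.coe_sum, Finset.sum_apply,
      ContinuousLinearMap.smulRight_apply, ContinuousLinearMap.proj_apply]
    refine Finset.sum_congr rfl fun ℓ _ => ?_
    rw [← Complex.coe_smul, ← Complex.coe_smul, smul_smul, ← add_smul, Complex.re_add_im]
  exact (hasFDerivAt_of_restrictScalars ℝ hM hML).differentiableAt.differentiableWithinAt

theorem WSRegular.sub {𝒞 : Set (EndE n)} {Ω : Set (Fin d → EndE n)}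
    {f g : (Fin d → EndE n) → V n} (hf : WSRegular n d 𝒞 Ω f) (hg : WSRegular n d 𝒞 Ω g)
    (hΩ : SliceOpen n d 𝒞 Ω) : WSRegular n d 𝒞 Ω (f - g) := by
  intro I hI
  obtain ⟨hfd, hfCR⟩ := hf I hI
  obtain ⟨hgd, hgCR⟩ := hg I hI
  refine ⟨hfd.sub hgd, fun p hp ℓ => ?_⟩
  have hpn := (hΩ.isOpen_preimage_Phi hI).mem_nhds hp
  rw [Pi.sub_comp, fderiv_sub (hfd.differentiableAt hpn) (hgd.differentiableAt hpn)]
  simp only [sub_apply, map_sub]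
  rw [sub_add_sub_comm, hfCR p hp ℓ, hgCR p hp ℓ, sub_zero]

end Holomorphy

section Propagation

variable {n d : ℕ} {𝒞 : Set (EndE n)} {Ω : Set (Fin d → EndE n)}
  {h : (Fin d → EndE n) → V n} {I : EndE n}

theorem complexCoords_comp_eventuallyEq_zero_iff {X : Type*} {l : Filter X} {φ : X → V n} :
    complexCoords I ∘ φ =ᶠ[l] 0 ↔ φ =ᶠ[l] 0 :=
  eventually_congr (.of_forall fun _ => complexCoords_eq_zero_iff I)

theorem eventuallyEq_zero_realMap_of_sliceMap {x : Fin d → ℝ}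
    (hx : h ∘ sliceMap n d I =ᶠ[𝓝 fun ℓ => (x ℓ : ℂ)] 0) : h ∘ realMap n d =ᶠ[𝓝 x] 0 := by
  rw [← sliceMap_comp_ofReal I, ← Function.comp_assoc]
  exact hx.comp_tendsto (by fun_prop : Continuous fun (y : Fin d → ℝ) ℓ => (y ℓ : ℂ)).continuousAt

theorem WSRegular.eventuallyEq_zero_of_mem_closure (hh : WSRegular n d 𝒞 Ω h)
    (hΩ : SliceOpen n d 𝒞 Ω) (hI : I ∈ 𝒞) (hI2 : I * I = -1) {z : Fin d → ℂ}
    (hz : sliceMap n d I z ∈ Ω) (hcl : z ∈ closure {w | h ∘ sliceMap n d I =ᶠ[𝓝 w] 0}) :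
    h ∘ sliceMap n d I =ᶠ[𝓝 z] 0 := by
  rw [← complexCoords_comp_eventuallyEq_zero_iff (I := I)]
  refine (hh.differentiableOn hΩ hI hI2).eventuallyEq_zero_of_mem_closure
    (hΩ.isOpen_preimage_sliceMap hI) hz
    (closure_mono (fun w hw => ?_) hcl)
  exact complexCoords_comp_eventuallyEq_zero_iff.2 hw

theorem WSRegular.eventuallyEq_zero_sliceMap_of_realMap (hh : WSRegular n d 𝒞 Ω h)
    (hΩ : SliceOpen n d 𝒞 Ω) (hI : I ∈ 𝒞) (hI2 : I * I = -1) {x : Fin d → ℝ}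
    (hx : realMap n d x ∈ Ω) (hreal : h ∘ realMap n d =ᶠ[𝓝 x] 0) :
    h ∘ sliceMap n d I =ᶠ[𝓝 fun ℓ => (x ℓ : ℂ)] 0 := by
  rw [← complexCoords_comp_eventuallyEq_zero_iff (I := I)]
  refine (hh.differentiableOn hΩ hI hI2).eventuallyEq_zero_of_real
    (hΩ.isOpen_preimage_sliceMap hI) (by rwa [mem_preimage, sliceMap_ofReal])
    (fun ℓ => Complex.ofReal_im _) ?_
  have hre : Tendsto (fun (w : Fin d → ℂ) ℓ => (w ℓ).re) (𝓝 fun ℓ => (x ℓ : ℂ)) (𝓝 x) := by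
    simpa using (by fun_prop : Continuous fun (w : Fin d → ℂ) ℓ => (w ℓ).re).tendsto
      (fun ℓ => (x ℓ : ℂ))
  filter_upwards [hre.eventually hreal] with w hw hw_real
  have hw_eq : w = fun ℓ => ((w ℓ).re : ℂ) := funext fun ℓ => Complex.ext rfl (by simp [hw_real ℓ])
  simp only [Function.comp_apply, Pi.zero_apply] at hw ⊢
  rw [hw_eq, sliceMap_ofReal, hw, map_zero]

theorem WSRegular.isOpen_diff_setOf_eventuallyEq_zero (hh : WSRegular n d 𝒞 Ω h)
    (hΩ : SliceOpen n d 𝒞 Ω) (hI : I ∈ 𝒞) (hI2 : I * I = -1) :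
    IsOpen (sliceMap n d I ⁻¹' Ω \ {w | h ∘ sliceMap n d I =ᶠ[𝓝 w] 0}) := by
  convert (hΩ.isOpen_preimage_sliceMap hI).sdiff isClosed_closure using 1
  ext w
  exact ⟨fun ⟨hw, hwZ⟩ => ⟨hw, fun hcl =>
    hwZ (hh.eventuallyEq_zero_of_mem_closure hΩ hI hI2 hw hcl)⟩,
    fun ⟨hw, hcl⟩ => ⟨hw, fun hwZ => hcl (subset_closure hwZ)⟩⟩

theorem WSRegular.eventuallyEq_zero_realMap_of_realConnected [Nontrivial (V n)]
    (hh : WSRegular n d 𝒞 Ω h) (hΩ : SliceOpen n d 𝒞 Ω) (hrc : RealConnected n d Ω) (hcs : 𝒞 ⊆ CS n)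
    {x₀ : Fin d → ℝ} (hx₀ : realMap n d x₀ ∈ Ω) (h₀ : h ∘ realMap n d =ᶠ[𝓝 x₀] 0)
    {x : Fin d → ℝ} (hx : realMap n d x ∈ Ω) : h ∘ realMap n d =ᶠ[𝓝 x] 0 := by
  obtain ⟨I, hI, -⟩ := mem_iUnion₂.1 (hΩ.1 hx₀)
  set A := realMap n d ⁻¹' Ω ∩ {y | h ∘ realMap n d =ᶠ[𝓝 y] 0}
  have hA : IsOpen A := (hΩ.isOpen_preimage hI (realMap n d).continuous
    (realMap_mem_CId I)).inter isOpen_setOfPred_eventually_nhds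
  suffices realMap n d ⁻¹' Ω ⊆ A from (this hx).2
  refine (isPreconnected_preimage_realMap hrc).subset_of_closure_inter_subset hA
    ⟨x₀, hx₀, hx₀, h₀⟩ fun y ⟨hyA, hyΩ⟩ => ⟨hyΩ, ?_⟩
  have hclosure : (fun ℓ => (y ℓ : ℂ)) ∈ closure {w | h ∘ sliceMap n d I =ᶠ[𝓝 w] 0} := by
    refine closure_mono ?_ (mem_closure_image
      (by fun_prop : Continuous fun (y : Fin d → ℝ) ℓ => (y ℓ : ℂ)).continuousAt hyA)
    rintro _ ⟨y', ⟨hy'Ω, hy'⟩, rfl⟩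
    exact hh.eventuallyEq_zero_sliceMap_of_realMap hΩ hI (hcs hI) hy'Ω hy'
  exact eventuallyEq_zero_realMap_of_sliceMap
    (hh.eventuallyEq_zero_of_mem_closure hΩ hI (hcs hI) (by rwa [sliceMap_ofReal]) hclosure)

theorem WSRegular.eqOn_zero_of_eventuallyEq_zero_realMap [Nontrivial (V n)]
    (hh : WSRegular n d 𝒞 Ω h) (hΩ : SliceDomain n d 𝒞 Ω) (hrc : RealConnected n d Ω)
    (hcs : 𝒞 ⊆ CS n) {x₀ : Fin d → ℝ} (hx₀ : realMap n d x₀ ∈ Ω)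
    (h₀ : h ∘ realMap n d =ᶠ[𝓝 x₀] 0) : EqOn h 0 Ω := by
  intro q hq
  obtain ⟨J, hJ, hqJ⟩ := mem_iUnion₂.1 (hΩ.1.1 hq)
  obtain ⟨z, rfl⟩ : q ∈ range (sliceMap n d J) := (range_sliceMap J).symm ▸ hqJ
  set Z := {w | h ∘ sliceMap n d J =ᶠ[𝓝 w] 0}
  by_contra hz
  have hzZ : z ∉ Z := fun hzZ => hz hzZ.self_of_nhds
  have hreal : ∀ w ∈ sliceMap n d J ⁻¹' Ω \ Z, sliceMap n d J w ∉ RealSet n d := by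
    rintro w ⟨hwΩ, hwZ⟩ hwR
    obtain ⟨y, rfl⟩ := exists_ofReal_of_sliceMap_mem_RealSet (hcs hJ) hwR
    rw [mem_preimage, sliceMap_ofReal] at hwΩ
    exact hwZ (hh.eventuallyEq_zero_sliceMap_of_realMap hΩ.1 hJ (hcs hJ) hwΩ
      (hh.eventuallyEq_zero_realMap_of_realConnected hΩ.1 hrc hcs hx₀ h₀ hwΩ))
  have hZ' : IsOpen (sliceMap n d J ⁻¹' Ω \ (sliceMap n d J ⁻¹' Ω \ Z)) := by
    rw [sdiff_sdiff_right_self]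
    exact (hΩ.1.isOpen_preimage_sliceMap hJ).inter isOpen_setOfPred_eventually_nhds
  have hcover := hΩ.subset_image_sliceMap hcs hJ
    (hh.isOpen_diff_setOf_eventuallyEq_zero hΩ.1 hJ (hcs hJ)) hZ' sdiff_subset ⟨z, hq, hzZ⟩
    hreal
  obtain ⟨w, hw, hwx₀⟩ := hcover hx₀
  exact hreal w hw (hwx₀ ▸ realMap_mem_RealSet x₀)

theorem WSRegular.eqOn_zero_of_eventuallyEq_zero_sliceMap [Nontrivial (V n)]
    (hh : WSRegular n d 𝒞 Ω h) (hΩ : SliceDomain n d 𝒞 Ω) (hrc : RealConnected n d Ω)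
    (hcs : 𝒞 ⊆ CS n) (hI : I ∈ 𝒞) {z₀ : Fin d → ℂ} (hz₀ : sliceMap n d I z₀ ∈ Ω)
    (h₀ : h ∘ sliceMap n d I =ᶠ[𝓝 z₀] 0) : EqOn h 0 Ω := by
  set C := sliceMap n d I ⁻¹' Ω ∩ {w | h ∘ sliceMap n d I =ᶠ[𝓝 w] 0}
  by_cases hreal : ∃ w ∈ C, sliceMap n d I w ∈ RealSet n d
  · obtain ⟨w, ⟨hwΩ, hwZ⟩, hwR⟩ := hreal
    obtain ⟨x, rfl⟩ := exists_ofReal_of_sliceMap_mem_RealSet (hcs hI) hwR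
    rw [mem_preimage, sliceMap_ofReal] at hwΩ
    exact hh.eqOn_zero_of_eventuallyEq_zero_realMap hΩ hrc hcs hwΩ
      (eventuallyEq_zero_realMap_of_sliceMap hwZ)
  · push Not at hreal
    have hC' : IsOpen (sliceMap n d I ⁻¹' Ω \ C) := by
      rw [sdiff_self_inter]
      exact hh.isOpen_diff_setOf_eventuallyEq_zero hΩ.1 hI (hcs hI)
    intro q hq
    obtain ⟨w, ⟨-, hwZ⟩, rfl⟩ := hΩ.subset_image_sliceMap hcs hI
      ((hΩ.1.isOpen_preimage_sliceMap hI).inter isOpen_setOfPred_eventually_nhds) hC'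
      inter_subset_left ⟨z₀, hz₀, h₀⟩ hreal hq
    exact hwZ.self_of_nhds

end Propagation

theorem identity_lemma_realConnected_general (n d : ℕ) (hn : 1 ≤ n)
    (𝒞 : Set (EndE n)) (hcs : 𝒞 ⊆ CS n)
    (Ω : Set (Fin d → EndE n)) (hΩ : SliceDomain n d 𝒞 Ω) (hrc : RealConnected n d Ω)
    (f g : (Fin d → EndE n) → V n)
    (hf : WSRegular n d 𝒞 Ω f) (hg : WSRegular n d 𝒞 Ω g) :
    ((Ω ∩ RealSet n d).Nonempty →
      ∀ D : Set (Fin d → EndE n), D.Nonempty → D ⊆ Ω ∩ RealSet n d →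
        (∃ U : Set (Fin d → EndE n), IsOpen U ∧ D = U ∩ RealSet n d) →
        Set.EqOn f g D → Set.EqOn f g Ω) ∧
    (∀ I ∈ 𝒞, ∀ D : Set (Fin d → EndE n), D.Nonempty → D ⊆ Ω ∩ CId n d I →
        (∃ U : Set (Fin d → EndE n), IsOpen U ∧ D = U ∩ CId n d I) →
        Set.EqOn f g D → Set.EqOn f g Ω) := by
  have : Nonempty (Fin (2 * n)) := ⟨⟨0, by omega⟩⟩
  have hfg := hf.sub hg hΩ.1
  refine ⟨fun _ D ⟨q, hq⟩ hDΩ ⟨U, hU, hD⟩ hfgD => ?_,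
    fun I hI D ⟨q, hq⟩ hDΩ ⟨U, hU, hD⟩ hfgD => ?_⟩
  · obtain ⟨x, rfl⟩ : q ∈ range (realMap n d) := range_realMap ▸ (hDΩ hq).2
    subst hD
    exact fun p hp => sub_eq_zero.1 (hfg.eqOn_zero_of_eventuallyEq_zero_realMap hΩ hrc hcs
      (hDΩ hq).1 (hfgD.eventuallyEq_sub_comp hU (realMap n d).continuous
        realMap_mem_RealSet hq.1) hp)
  · obtain ⟨z, rfl⟩ : q ∈ range (sliceMap n d I) := (range_sliceMap I).symm ▸ (hDΩ hq).2
    subst hD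
    exact fun p hp => sub_eq_zero.1 (hfg.eqOn_zero_of_eventuallyEq_zero_sliceMap hΩ hrc hcs hI
      (hDΩ hq).1 (hfgD.eventuallyEq_sub_comp hU (sliceMap n d I).continuous
        (sliceMap_mem_CId I) hq.1) hp)

/-- Identity lemma on real-connected slice-domains: two weak slice regular functions
agreeing on a nonempty relatively open subset of Ω ∩ ℝ^d (when Ω meets the reals), or of
some Ω ∩ ℂ_I^d, agree on all of Ω. -/
theorem identity_lemma_realConnected (n d : ℕ) (hn : 1 ≤ n) (hd : 1 ≤ d)
    (𝒞 : Set (EndE n)) (h𝒞 : 𝒞.Nonempty) (hsym : ∀ I ∈ 𝒞, -I ∈ 𝒞) (hcs : 𝒞 ⊆ CS n)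
    (Ω : Set (Fin d → EndE n)) (hΩ : SliceDomain n d 𝒞 Ω) (hrc : RealConnected n d Ω)
    (f g : (Fin d → EndE n) → V n)
    (hf : WSRegular n d 𝒞 Ω f) (hg : WSRegular n d 𝒞 Ω g) :
    ((Ω ∩ RealSet n d).Nonempty →
      ∀ D : Set (Fin d → EndE n), D.Nonempty → D ⊆ Ω ∩ RealSet n d →
        (∃ U : Set (Fin d → EndE n), IsOpen U ∧ D = U ∩ RealSet n d) →
        Set.EqOn f g D → Set.EqOn f g Ω) ∧
    (∀ I ∈ 𝒞, ∀ D : Set (Fin d → EndE n), D.Nonempty → D ⊆ Ω ∩ CId n d I →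
        (∃ U : Set (Fin d → EndE n), IsOpen U ∧ D = U ∩ CId n d I) →
        Set.EqOn f g D → Set.EqOn f g Ω) :=
  identity_lemma_realConnected_general n d hn 𝒞 hcs Ω hΩ hrc f g hf hg
end
end

section
/- (Maximum Modulus Principle) Let Ω be a slice-domain in W and let f : Ω → ℝ^{2n} be weak slice regular. If there exists p ∈ Ω such that |f(q)| ≤ |f(p)| for all q ∈ Ω, where |·| is the Euclidean norm on ℝ^{2n}, then f is constant on Ω, i.e. f ≡ f(p). -/
noncomputable section

/-!
On a slice `ℂ_I^d`, `f ∘ Φ_I` satisfies Cauchy–Riemann equations for the complex structure `I`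
of the target. Pairing with `u = f p` through `v ↦ ⟪u, v⟫ - i ⟪u, I v⟫` turns `I` into
multiplication by `i`, so this scalar function is holomorphic; its real part `⟪u, f⟫ ≤ ‖u‖²`
attains its maximum wherever `f = u`, and the maximum modulus principle applied to its
exponential forces `f = u` nearby. Hence `{f = f p}` is open in every slice, i.e. slice-open,
as is its complement in `Ω` by continuity, and connectedness of `Ω` in `τ_s` concludes.
-/

open RealInnerProductSpace Topology Set

lemma ContinuousLinearMap.apply_apply_of_mul_self_eq_neg_one {E : Type*} [NormedAddCommGroup E]
    [NormedSpace ℝ E] {I : E →L[ℝ] E} (hI : I * I = -1) (v : E) : I (I v) = -v := by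
  simpa using congr($hI v)

lemma eq_zero_and_eq_zero_of_smul_one_add_smul_eq_zero {A : Type*} [Ring A] [Algebra ℝ A]
    [Nontrivial A] {I : A} (hI : I * I = -1) {a b : ℝ} (h : a • (1 : A) + b • I = 0) :
    a = 0 ∧ b = 0 := by
  have hsq : (a ^ 2 + b ^ 2) • (1 : A) = 0 := by
    calc (a ^ 2 + b ^ 2) • (1 : A) = (a • 1 - b • I) * (a • 1 + b • I) := by
          simp only [sub_mul, mul_add, smul_mul_smul, one_mul, mul_one, hI]; module
      _ = 0 := by rw [h, mul_zero]
  have : a ^ 2 + b ^ 2 = 0 := (smul_eq_zero.mp hsq).resolve_right one_ne_zero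
  constructor <;> nlinarith [sq_nonneg a, sq_nonneg b]

lemma eq_of_norm_le_of_inner_eq_norm_sq {E : Type*} [NormedAddCommGroup E] [InnerProductSpace ℝ E]
    {u v : E} (hv : ‖v‖ ≤ ‖u‖) (h : ⟪u, v⟫ = ‖u‖ ^ 2) : v = u := by
  have : ‖v - u‖ ^ 2 ≤ 0 := by
    rw [norm_sub_sq_real, real_inner_comm, h]
    nlinarith [norm_nonneg v]
  rw [← sub_eq_zero, ← norm_eq_zero]
  nlinarith [norm_nonneg (v - u)]

section Scalarization

variable {E : Type*} [NormedAddCommGroup E] [InnerProductSpace ℝ E]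

def scalarization (u : E) (I : E →L[ℝ] E) : E →L[ℝ] ℂ :=
  Complex.ofRealCLM.comp (innerSL ℝ u) - Complex.I • Complex.ofRealCLM.comp ((innerSL ℝ u).comp I)

lemma re_scalarization (u : E) (I : E →L[ℝ] E) (v : E) : (scalarization u I v).re = ⟪u, v⟫ := by
  simp [scalarization]

lemma scalarization_apply_apply {I : E →L[ℝ] E} (hI : I * I = -1) (u v : E) :
    scalarization u I (I v) = Complex.I * scalarization u I v := by
  simp only [scalarization, sub_apply, smul_apply, ContinuousLinearMap.comp_apply,
    I.apply_apply_of_mul_self_eq_neg_one hI, map_neg, Complex.ofRealCLM_apply, smul_eq_mul]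
  ring_nf
  rw [Complex.I_sq]
  ring

end Scalarization

lemma Complex.smul_eq_re_smul_add_im_smul_I_smul {M : Type*} [AddCommGroup M] [Module ℂ M]
    (c : ℂ) (w : M) : c • w = c.re • w + c.im • (Complex.I • w) := by
  rw [← Complex.coe_smul, ← Complex.coe_smul, smul_smul, ← add_smul, Complex.re_add_im]

lemma HasFDerivAt.differentiableAt_complex {X F : Type*} [NormedAddCommGroup X] [NormedSpace ℂ X]
    [NormedAddCommGroup F] [NormedSpace ℂ F] {g : X → F} {D : X →L[ℝ] F} {z : X}
    (h : HasFDerivAt g D z) (hD : ∀ w, D (Complex.I • w) = Complex.I • D w) :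
    DifferentiableAt ℂ g z := by
  let D' : X →L[ℂ] F :=
    { toFun := D
      map_add' := map_add D
      map_smul' := fun c w => by
        simp only [Complex.smul_eq_re_smul_add_im_smul_I_smul c, map_add, map_smul, hD,
          RingHom.id_apply]
      cont := D.cont }
  exact (hasFDerivAt_of_restrictScalars ℝ h (f' := D') rfl).differentiableAt

lemma Complex.eventually_re_eq_of_isLocalMax_re {X : Type*} [NormedAddCommGroup X]
    [NormedSpace ℂ X] {g : X → ℂ} {c : X} (hd : ∀ᶠ z in 𝓝 c, DifferentiableAt ℂ g z)
    (hc : IsLocalMax (fun z => (g z).re) c) : ∀ᶠ z in 𝓝 c, (g z).re = (g c).re := by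
  have hnorm : norm ∘ (fun z => Complex.exp (g z)) = Real.exp ∘ fun z => (g z).re := by
    funext z; simp [Complex.norm_exp]
  have hmax : IsLocalMax (norm ∘ fun z => Complex.exp (g z)) c :=
    hnorm ▸ hc.comp_mono Real.exp_monotone
  filter_upwards [Complex.norm_eventually_eq_of_isLocalMax (hd.mono fun z hz => hz.cexp) hmax]
    with z hz
  simpa [Complex.norm_exp] using hz

theorem eventually_eq_of_isLocalMax_norm_of_complexStructure {X E : Type*}
    [NormedAddCommGroup X] [NormedSpace ℂ X] [NormedAddCommGroup E] [InnerProductSpace ℝ E]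
    {I : E →L[ℝ] E} (hI : I * I = -1) {F : X → E} {c : X}
    (hF : ∀ᶠ z in 𝓝 c, DifferentiableAt ℝ F z ∧
      ∀ w, fderiv ℝ F z (Complex.I • w) = I (fderiv ℝ F z w))
    (hc : IsLocalMax (norm ∘ F) c) : ∀ᶠ z in 𝓝 c, F z = F c := by
  set G : X → ℂ := fun z => scalarization (F c) I (F z)
  have hG : ∀ᶠ z in 𝓝 c, DifferentiableAt ℂ G z := hF.mono fun z ⟨hdiff, hCR⟩ =>
    ((scalarization (F c) I).hasFDerivAt.comp z hdiff.hasFDerivAt).differentiableAt_complex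
      fun w => by simp [hCR, scalarization_apply_apply hI]
  have hGmax : IsLocalMax (fun z => (G z).re) c := by
    filter_upwards [hc] with z hz
    simp only [G, re_scalarization, real_inner_self_eq_norm_sq]
    calc ⟪F c, F z⟫ ≤ ‖F c‖ * ‖F z‖ := real_inner_le_norm _ _
      _ ≤ ‖F c‖ ^ 2 := by rw [sq]; exact mul_le_mul_of_nonneg_left hz (norm_nonneg _)
  filter_upwards [hc, Complex.eventually_re_eq_of_isLocalMax_re hG hGmax] with z hz hre
  simp only [G, re_scalarization, real_inner_self_eq_norm_sq] at hre
  exact eq_of_norm_le_of_inner_eq_norm_sq hz hre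

section Coordinates

variable {d : ℕ}

def reImEquiv (d : ℕ) : (Fin d → ℂ) ≃L[ℝ] (Fin d → ℝ) × (Fin d → ℝ) :=
  LinearEquiv.toContinuousLinearEquiv
    { toFun := fun z => (fun ℓ => (z ℓ).re, fun ℓ => (z ℓ).im)
      invFun := fun x ℓ => ⟨x.1 ℓ, x.2 ℓ⟩
      map_add' := fun _ _ => rfl
      map_smul' := fun _ _ => by ext <;> simp
      left_inv := fun _ => rfl
      right_inv := fun _ => rfl }

lemma reImEquiv_I_smul (z : Fin d → ℂ) :
    reImEquiv d (Complex.I • z) = (-(reImEquiv d z).2, (reImEquiv d z).1) := by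
  ext <;> simp [reImEquiv]

lemma map_neg_snd_fst_of_cauchyRiemann {E : Type*} [NormedAddCommGroup E] [NormedSpace ℝ E]
    {I : E →L[ℝ] E} (hI : I * I = -1) {A : (Fin d → ℝ) × (Fin d → ℝ) →L[ℝ] E}
    (hA : ∀ ℓ, A (ex d ℓ) + I (A (ey d ℓ)) = 0) (x : (Fin d → ℝ) × (Fin d → ℝ)) :
    A (-x.2, x.1) = I (A x) := by
  have hx (ℓ : Fin d) : A (ex d ℓ) = -I (A (ey d ℓ)) := eq_neg_of_add_eq_zero_left (hA ℓ)
  have hJ : A.comp ((-ContinuousLinearMap.snd ℝ _ _).prod (ContinuousLinearMap.fst ℝ _ _)) =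
      I.comp A := by
    apply ContinuousLinearMap.coe_injective
    refine ((Pi.basisFun ℝ (Fin d)).prod (Pi.basisFun ℝ (Fin d))).ext fun i => ?_
    rcases i with ℓ | ℓ
    · rw [show (Pi.basisFun ℝ (Fin d)).prod (Pi.basisFun ℝ (Fin d)) (.inl ℓ) = ex d ℓ by
        simp [Module.Basis.prod_apply, ex]]
      change A (-0, Pi.single ℓ 1) = I (A (ex d ℓ))
      rw [hx, map_neg, I.apply_apply_of_mul_self_eq_neg_one hI, neg_neg, neg_zero]
      rfl
    · rw [show (Pi.basisFun ℝ (Fin d)).prod (Pi.basisFun ℝ (Fin d)) (.inr ℓ) = ey d ℓ by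
        simp [Module.Basis.prod_apply, ey]]
      change A (-Pi.single ℓ 1, 0) = I (A (ey d ℓ))
      rw [← neg_eq_iff_eq_neg.mpr (hx ℓ), ← map_neg]
      simp [ex]
  exact congr($hJ x)

end Coordinates

theorem isOpen_setOf_eq_of_norm_le_of_cauchyRiemann {d : ℕ} {E : Type*} [NormedAddCommGroup E]
    [InnerProductSpace ℝ E] {I : E →L[ℝ] E} (hI : I * I = -1)
    {U : Set ((Fin d → ℝ) × (Fin d → ℝ))} (hU : IsOpen U) {g : (Fin d → ℝ) × (Fin d → ℝ) → E}
    (hg : DifferentiableOn ℝ g U)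
    (hCR : ∀ x ∈ U, ∀ ℓ, fderiv ℝ g x (ex d ℓ) + I (fderiv ℝ g x (ey d ℓ)) = 0)
    {u : E} (hmax : ∀ x ∈ U, ‖g x‖ ≤ ‖u‖) : IsOpen {x ∈ U | g x = u} := by
  rw [isOpen_iff_mem_nhds]
  rintro x₀ ⟨hx₀, rfl⟩
  set e := reImEquiv d
  have hU' : e ⁻¹' U ∈ 𝓝 (e.symm x₀) :=
    e.continuous.continuousAt.preimage_mem_nhds (by simpa using hU.mem_nhds hx₀)
  have hF : ∀ᶠ z in 𝓝 (e.symm x₀), DifferentiableAt ℝ (g ∘ e) z ∧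
      ∀ w, fderiv ℝ (g ∘ e) z (Complex.I • w) = I (fderiv ℝ (g ∘ e) z w) := by
    filter_upwards [hU'] with z hz
    refine ⟨(hg.differentiableAt (hU.mem_nhds hz)).comp z e.differentiableAt, fun w => ?_⟩
    simp [e.comp_right_fderiv, e, reImEquiv_I_smul,
      map_neg_snd_fst_of_cauchyRiemann hI (hCR _ hz)]
  have hlocmax : IsLocalMax (norm ∘ g ∘ e) (e.symm x₀) := by
    filter_upwards [hU'] with z hz
    simpa using hmax _ hz
  have hconst := (e.symm.continuous.tendsto x₀).eventually
    (eventually_eq_of_isLocalMax_norm_of_complexStructure hI hF hlocmax)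
  filter_upwards [hU.mem_nhds hx₀, hconst] with x hx hgx
  exact ⟨hx, by simpa using hgx⟩

section SliceTopology

variable {n d : ℕ}

def phiCLM (n d : ℕ) (I : EndE n) : (Fin d → ℝ) × (Fin d → ℝ) →L[ℝ] (Fin d → EndE n) :=
  ContinuousLinearMap.pi fun ℓ =>
    ((ContinuousLinearMap.proj ℓ).comp (ContinuousLinearMap.fst ℝ _ _)).smulRight 1 +
    ((ContinuousLinearMap.proj ℓ).comp (ContinuousLinearMap.snd ℝ _ _)).smulRight I

lemma coe_phiCLM (I : EndE n) : ⇑(phiCLM n d I) = Phi n d I := rfl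

lemma range_phi (I : EndE n) : range (Phi n d I) = CId n d I := by
  ext q
  constructor
  · rintro ⟨x, rfl⟩ ℓ
    exact ⟨x.1 ℓ, x.2 ℓ, rfl⟩
  · intro hq
    choose x y hxy using hq
    exact ⟨(x, y), funext fun ℓ => (hxy ℓ).symm⟩

lemma phi_injective (hn : 1 ≤ n) {I : EndE n} (hI : I ∈ CS n) : Function.Injective (Phi n d I) := by
  have : Nonempty (Fin (2 * n)) := ⟨⟨0, by omega⟩⟩
  rw [← coe_phiCLM, injective_iff_map_eq_zero]
  intro x hx
  have h ℓ := eq_zero_and_eq_zero_of_smul_one_add_smul_eq_zero hI (congr_fun hx ℓ)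
  exact Prod.ext (funext fun ℓ => (h ℓ).1) (funext fun ℓ => (h ℓ).2)

lemma SliceOpen.isOpen_preimage_phi {𝒞 : Set (EndE n)} {Ω : Set (Fin d → EndE n)}
    (hΩ : SliceOpen n d 𝒞 Ω) {I : EndE n} (hI : I ∈ 𝒞) : IsOpen (Phi n d I ⁻¹' Ω) := by
  obtain ⟨U, hU, hΩU⟩ := hΩ.2 I hI
  have hpre : Phi n d I ⁻¹' Ω = Phi n d I ⁻¹' U := by
    ext x
    have hx : Phi n d I x ∈ CId n d I := range_phi I ▸ mem_range_self x
    simpa [hx] using Set.ext_iff.mp hΩU (Phi n d I x)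
  rw [hpre]
  exact hU.preimage (phiCLM n d I).continuous

lemma isOpen_sliceTop_of_isOpen_preimage_phi (hn : 1 ≤ n) {𝒞 : Set (EndE n)} (hcs : 𝒞 ⊆ CS n)
    {S : Set (Fin d → EndE n)} (hS : ∀ I ∈ 𝒞, IsOpen (Phi n d I ⁻¹' S)) :
    IsOpen[sliceTop n d 𝒞] S := by
  unfold sliceTop
  simp only [isOpen_iSup_iff, isOpen_coinduced]
  intro I hI
  have hemb : IsEmbedding (Phi n d I) :=
    (LinearMap.isClosedEmbedding_of_injective (f := (phiCLM n d I).toLinearMap)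
      (LinearMap.ker_eq_bot.mpr (phi_injective hn (hcs hI)))).isEmbedding
  obtain ⟨V, hV, hVS⟩ := hemb.isInducing.isOpen_iff.mp (hS I hI)
  convert hV.preimage continuous_subtype_val using 1
  ext ⟨q, hq⟩
  obtain ⟨x, rfl⟩ : q ∈ range (Phi n d I) := (range_phi I).symm ▸ hq
  exact (Set.ext_iff.mp hVS x).symm

end SliceTopology

theorem maximum_modulus_principle_general (n d : ℕ) (hn : 1 ≤ n)
    (𝒞 : Set (EndE n)) (hcs : 𝒞 ⊆ CS n)
    (Ω : Set (Fin d → EndE n)) (hΩ : SliceDomain n d 𝒞 Ω)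
    (f : (Fin d → EndE n) → V n) (hf : WSRegular n d 𝒞 Ω f)
    (p : Fin d → EndE n) (hp : p ∈ Ω)
    (hmax : ∀ q ∈ Ω, ‖f q‖ ≤ ‖f p‖) :
    ∀ q ∈ Ω, f q = f p := by
  set S := {q ∈ Ω | f q = f p}
  have hS : IsOpen[sliceTop n d 𝒞] S := isOpen_sliceTop_of_isOpen_preimage_phi hn hcs fun I hI =>
    isOpen_setOf_eq_of_norm_le_of_cauchyRiemann (hcs hI) (hΩ.1.isOpen_preimage_phi hI)
      (hf I hI).1 (hf I hI).2 fun x hx => hmax _ hx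
  have hΩS : IsOpen[sliceTop n d 𝒞] (Ω \ S) :=
    isOpen_sliceTop_of_isOpen_preimage_phi hn hcs fun I hI => by
      convert (hf I hI).1.continuousOn.isOpen_inter_preimage (hΩ.1.isOpen_preimage_phi hI)
        (isOpen_compl_singleton (x := f p)) using 1
      ext x
      simp [S]
  have hΩ_sub : Ω ⊆ S :=
    @IsPreconnected.subset_left_of_subset_union _ (sliceTop n d 𝒞) _ _ _ hS hΩS
      disjoint_sdiff_right (by rw [union_sdiff_self]; exact subset_union_right) ⟨p, hp, hp, rfl⟩
      hΩ.2.2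
  exact fun q hq => (hΩ_sub hq).2

/-- (Maximum Modulus Principle) A weak slice regular function on a slice-domain whose
Euclidean norm attains its maximum at a point of the domain is constant. -/
theorem maximum_modulus_principle (n d : ℕ) (hn : 1 ≤ n) (hd : 1 ≤ d)
    (𝒞 : Set (EndE n)) (h𝒞 : 𝒞.Nonempty) (hsym : ∀ I ∈ 𝒞, -I ∈ 𝒞) (hcs : 𝒞 ⊆ CS n)
    (Ω : Set (Fin d → EndE n)) (hΩ : SliceDomain n d 𝒞 Ω)
    (f : (Fin d → EndE n) → V n) (hf : WSRegular n d 𝒞 Ω f)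
    (p : Fin d → EndE n) (hp : p ∈ Ω)
    (hmax : ∀ q ∈ Ω, ‖f q‖ ≤ ‖f p‖) :
    ∀ q ∈ Ω, f q = f p :=
  maximum_modulus_principle_general n d hn 𝒞 hcs Ω hΩ f hf p hp hmax
end
end
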